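/- For every natural number n ≥ 1, the group Gₙ generated by α₁, α₂, α₃, β₁, β₂, β₃ subject to the relations α₂ = [β₁⁻¹, β₂⁻¹], β₂ = [β₁, α₂⁻¹], α₁ = [β₁⁻¹, β₃⁻¹], β₁ = [α₁⁻¹, β₃], α₃ = [β₂⁻¹, β₃⁻¹], β₃ = [β₂, α₃⁻¹]^(-(n+1)), together with [α₁, β₁] = 1, [α₁, α₂] = 1, [α₁, β₂] = 1, [α₁, α₃] = 1, [β₁, α₃] = 1, [α₂, β₂] = 1, [α₂, α₃] = 1, [α₂, β₃] = 1, [α₃, β₃] = 1, is the trivial group. -/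

import Mathlib

/-!
The relations `β₁ = ⁅α₁⁻¹, β₃⁆` and `α₁ = ⁅β₁⁻¹, β₃⁻¹⁆` together force `β₁ = β₃⁻¹ α₁⁻¹ β₃`.
Since `α₂` commutes with `α₁` and `β₃`, it therefore commutes with `β₁`, so `β₂ = ⁅β₁, α₂⁻¹⁆`
is trivial. The remaining relations then kill the other generators one after another.
-/

namespace Stmt1

open scoped commutatorElement

def α₁ : FreeGroup (Fin 6) := FreeGroup.of 0
def α₂ : FreeGroup (Fin 6) := FreeGroup.of 1
def α₃ : FreeGroup (Fin 6) := FreeGroup.of 2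
def β₁ : FreeGroup (Fin 6) := FreeGroup.of 3
def β₂ : FreeGroup (Fin 6) := FreeGroup.of 4
def β₃ : FreeGroup (Fin 6) := FreeGroup.of 5

/-- Relators of the presentation of `π₁(Xₙ)`: as in Section 3, except that
the relation `β₃ = ⁅β₂, α₃⁻¹⁆` is replaced by `β₃ = ⁅β₂, α₃⁻¹⁆^(-(n+1))`. -/
def rels (n : ℕ) : Set (FreeGroup (Fin 6)) :=
  { α₂⁻¹ * ⁅β₁⁻¹, β₂⁻¹⁆,
    β₂⁻¹ * ⁅β₁, α₂⁻¹⁆,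
    α₁⁻¹ * ⁅β₁⁻¹, β₃⁻¹⁆,
    β₁⁻¹ * ⁅α₁⁻¹, β₃⁆,
    α₃⁻¹ * ⁅β₂⁻¹, β₃⁻¹⁆,
    β₃⁻¹ * ⁅β₂, α₃⁻¹⁆ ^ (-((n : ℤ) + 1)),
    ⁅α₁, β₁⁆, ⁅α₁, α₂⁆, ⁅α₁, β₂⁆, ⁅α₁, α₃⁆, ⁅β₁, α₃⁆,
    ⁅α₂, β₂⁆, ⁅α₂, α₃⁆, ⁅α₂, β₃⁆, ⁅α₃, β₃⁆ }

section Relations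

variable {G : Type*} [Group G]

theorem eq_conj_inv_of_eq_commutatorElement {a b c : G} (hb : b = ⁅a⁻¹, c⁆)
    (ha : a = ⁅b⁻¹, c⁻¹⁆) : b = c⁻¹ * a⁻¹ * c := by
  have hca : c⁻¹ * b * c = b * a := by rw [ha, commutatorElement_def]; group
  have hcb : c⁻¹ * b * c = c⁻¹ * a⁻¹ * c * a := by rw [hb, commutatorElement_def]; group
  exact mul_right_cancel (hca.symm.trans hcb)

theorem generators_eq_one_of_relations {a₁ a₂ a₃ b₁ b₂ b₃ : G} (m : ℤ)
    (h₁ : a₂ = ⁅b₁⁻¹, b₂⁻¹⁆) (h₂ : b₂ = ⁅b₁, a₂⁻¹⁆) (h₃ : a₁ = ⁅b₁⁻¹, b₃⁻¹⁆)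
    (h₄ : b₁ = ⁅a₁⁻¹, b₃⁆) (h₅ : a₃ = ⁅b₂⁻¹, b₃⁻¹⁆) (h₆ : b₃ = ⁅b₂, a₃⁻¹⁆ ^ m)
    (c₁₂ : Commute a₁ a₂) (c₂₃ : Commute a₂ b₃) :
    a₁ = 1 ∧ a₂ = 1 ∧ a₃ = 1 ∧ b₁ = 1 ∧ b₂ = 1 ∧ b₃ = 1 := by
  have c₂₁ : Commute a₂ b₁ := by
    rw [eq_conj_inv_of_eq_commutatorElement h₄ h₃]
    exact (c₂₃.inv_right.mul_right c₁₂.symm.inv_right).mul_right c₂₃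
  have hb₂ : b₂ = 1 := by
    rw [h₂, commutatorElement_eq_one_iff_commute]
    exact c₂₁.symm.inv_right
  have ha₂ : a₂ = 1 := by simpa [hb₂] using h₁
  have ha₃ : a₃ = 1 := by simpa [hb₂] using h₅
  have hb₃ : b₃ = 1 := by simpa [hb₂] using h₆
  have hb₁ : b₁ = 1 := by simpa [hb₃] using h₄
  have ha₁ : a₁ = 1 := by simpa [hb₁, hb₃] using h₃
  exact ⟨ha₁, ha₂, ha₃, hb₁, hb₂, hb₃⟩

end Relations

theorem _root_.PresentedGroup.eq_one_of_forall_of_eq_one {α : Type*} {rels : Set (FreeGroup α)}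
    (h : ∀ j : α, (PresentedGroup.of j : PresentedGroup rels) = 1) (x : PresentedGroup rels) :
    x = 1 :=
  Subgroup.mem_bot.mp <|
    PresentedGroup.generated_by rels ⊥ (fun j ↦ Subgroup.mem_bot.mpr (h j)) x

theorem _root_.PresentedGroup.commute_of_commutatorElement_mem {α : Type*} {rels : Set (FreeGroup α)}
    {x y : FreeGroup α} (h : ⁅x, y⁆ ∈ rels) :
    Commute (PresentedGroup.mk rels x) (PresentedGroup.mk rels y) := by
  rw [← commutatorElement_eq_one_iff_commute, ← map_commutatorElement]
  exact PresentedGroup.one_of_mem h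

theorem presented_group_trivial_general (n : ℕ) :
    ∀ x : PresentedGroup (rels n), x = 1 := by
  open _root_.PresentedGroup in
  obtain ⟨ha₁, ha₂, ha₃, hb₁, hb₂, hb₃⟩ := generators_eq_one_of_relations (-((n : ℤ) + 1))
    (by simpa using mk_eq_mk_of_inv_mul_mem (show α₂⁻¹ * ⁅β₁⁻¹, β₂⁻¹⁆ ∈ rels n by simp [rels]))
    (by simpa using mk_eq_mk_of_inv_mul_mem (show β₂⁻¹ * ⁅β₁, α₂⁻¹⁆ ∈ rels n by simp [rels]))
    (by simpa using mk_eq_mk_of_inv_mul_mem (show α₁⁻¹ * ⁅β₁⁻¹, β₃⁻¹⁆ ∈ rels n by simp [rels]))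
    (by simpa using mk_eq_mk_of_inv_mul_mem (show β₁⁻¹ * ⁅α₁⁻¹, β₃⁆ ∈ rels n by simp [rels]))
    (by simpa using mk_eq_mk_of_inv_mul_mem (show α₃⁻¹ * ⁅β₂⁻¹, β₃⁻¹⁆ ∈ rels n by simp [rels]))
    (by simpa using mk_eq_mk_of_inv_mul_mem
          (show β₃⁻¹ * ⁅β₂, α₃⁻¹⁆ ^ (-((n : ℤ) + 1)) ∈ rels n by simp [rels]))
    (commute_of_commutatorElement_mem (show ⁅α₁, α₂⁆ ∈ rels n by simp [rels]))
    (commute_of_commutatorElement_mem (show ⁅α₂, β₃⁆ ∈ rels n by simp [rels]))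
  refine PresentedGroup.eq_one_of_forall_of_eq_one fun j ↦ ?_
  fin_cases j
  exacts [ha₁, ha₂, ha₃, hb₁, hb₂, hb₃]

theorem presented_group_trivial (n : ℕ) (hn : 1 ≤ n) :
    ∀ x : PresentedGroup (rels n), x = 1 :=
  presented_group_trivial_general n

end Stmt1
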